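/- Let H be a locally finite graph which contains a subgraph of bounded degree that is quasi-isometric to the infinite δ-regular tree for some δ ≥ 3 (the infinite tree in which every vertex has degree exactly δ). Then H does not satisfy the O(n^d)-containment property for any d ≥ 0. -/

import Mathlib

/-!
In a tree every vertex has at most one neighbour closer to a fixed root, so of the `δ|S|` edges
leaving the vertices of a finite set `S` in a `δ`-regular tree at most `2|S|` end inside `S`; for
`δ ≥ 3` this gives the linear isoperimetric inequality `|S| ≤ δ |∂S|`. A quasi-isometry between
bounded-degree graphs moves finite sets and their boundaries with bounded multiplicity, so the
subgraph `G` satisfies `|S| ≤ K |∂S|` as well. Hence the burning part `S_n` of `G` gains at least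
`|S_n| / (K + 1)` vertices per step, less the at most `c (n + 1)^(d + 1)` vertices protected so
far: an initial fire of large enough size grows geometrically and is never contained.
-/

open SimpleGraph

namespace Firefighter

variable {V : Type*}

/-- The set of vertices on fire at time `n`, starting from initial fire `X0`, with fire spreading
along paths of length at most `r` avoiding the protected sets `W 1, ..., W n`. -/
def fireSet (G : SimpleGraph V) (r : ℕ) (X0 : Set V) (W : ℕ → Set V) : ℕ → Set V
  | 0 => X0
  | n + 1 => {v | ∃ u ∈ fireSet G r X0 W n, ∃ p : G.Walk u v, p.length ≤ r ∧
      ∀ w ∈ p.support, ∀ i, 1 ≤ i → i ≤ n + 1 → w ∉ W i}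

/-- `W` is an `(f, r)`-containment strategy for the initial fire `X0` in `G`. -/
def IsContainmentStrategy (G : SimpleGraph V) (r : ℕ) (f : ℕ → ℕ)
    (X0 : Set V) (W : ℕ → Set V) : Prop :=
  (∀ n, 1 ≤ n → (W n).Finite ∧ (W n).ncard ≤ f n) ∧
  (∀ n, Disjoint (fireSet G r X0 W n) (W (n + 1))) ∧
  (∃ N, 0 < N ∧ ∀ n, N ≤ n → fireSet G r X0 W n = fireSet G r X0 W N)

/-- `G` has the `(f, r)`-containment property. -/
def HasContainmentProperty (G : SimpleGraph V) (r : ℕ) (f : ℕ → ℕ) : Prop :=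
  ∀ X0 : Set V, X0.Finite → ∃ W : ℕ → Set V, IsContainmentStrategy G r f X0 W

/-- A graph is locally finite if every vertex has finitely many neighbors. -/
def LocallyFiniteGraph (G : SimpleGraph V) : Prop := ∀ v, (G.neighborSet v).Finite

/-- The ball of radius `n` about the vertex `g0` (in the combinatorial metric). -/
def ball (G : SimpleGraph V) (g0 : V) (n : ℕ) : Set V :=
  {v | G.Reachable g0 v ∧ G.dist g0 v ≤ n}

/-- The sphere of radius `n` about the vertex `g0` (in the combinatorial metric). -/
def sphere (G : SimpleGraph V) (g0 : V) (n : ℕ) : Set V :=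
  {v | G.Reachable g0 v ∧ G.dist g0 v = n}

/-- For `T` a subset of the sphere of radius `n`, `nextAdj G g0 n T` is the set `T*` of vertices
of the sphere of radius `n+1` adjacent to at least one vertex of `T`. -/
def nextAdj (G : SimpleGraph V) (g0 : V) (n : ℕ) (T : Set V) : Set V :=
  {v ∈ sphere G g0 (n + 1) | ∃ u ∈ T, G.Adj u v}

/-- A graph has bounded degree if there is a uniform finite bound on vertex degrees. -/
def BoundedDegree (G : SimpleGraph V) : Prop :=
  ∃ D : ℕ, ∀ v, (G.neighborSet v).Finite ∧ (G.neighborSet v).ncard ≤ D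

/-- Two graphs are quasi-isometric. -/
def QuasiIsometric {V' : Type*} (G : SimpleGraph V) (H : SimpleGraph V') : Prop :=
  ∃ c : ℕ, 1 ≤ c ∧ ∃ (φ : V → V') (ψ : V' → V),
    (∀ g1 g2, H.dist (φ g1) (φ g2) ≤ c * G.dist g1 g2 + c) ∧
    (∀ h1 h2, G.dist (ψ h1) (ψ h2) ≤ c * H.dist h1 h2 + c) ∧
    (∀ g, G.dist g (ψ (φ g)) ≤ c) ∧
    (∀ h, H.dist h (φ (ψ h)) ≤ c)

/-- `f ≼ g` : there is `c > 0` with `f n ≤ c * g (c*n + c) + c` for all `n ≥ c`. -/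
def Preceq (f g : ℕ → ℕ) : Prop :=
  ∃ c : ℕ, 0 < c ∧ ∀ n, c ≤ n → f n ≤ c * g (c * n + c) + c

/-- `f` and `g` have equivalent asymptotic growth. -/
def AsympEquiv (f g : ℕ → ℕ) : Prop := Preceq f g ∧ Preceq g f

/-- The ball of radius `n` about a set `X` of vertices. -/
def ballSet (G : SimpleGraph V) (X : Set V) (n : ℕ) : Set V :=
  {v | ∃ u ∈ X, ∃ p : G.Walk u v, p.length ≤ n}

def outerBoundary (G : SimpleGraph V) (S : Set V) : Set V :=
  {v | v ∉ S ∧ ∃ u ∈ S, G.Adj u v}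

def IsoperimetricWith (G : SimpleGraph V) (K : ℕ) : Prop :=
  ∀ S : Set V, S.Finite → S.ncard ≤ K * (outerBoundary G S).ncard

theorem outerBoundary_finite {G : SimpleGraph V} (hG : ∀ v, (G.neighborSet v).Finite) {S : Set V}
    (hS : S.Finite) : (outerBoundary G S).Finite :=
  (hS.biUnion fun u _ => hG u).subset fun _ ⟨_, _, hu, huv⟩ => Set.mem_biUnion hu huv

theorem IsoperimetricWith.infinite [Nonempty V] {G : SimpleGraph V} {K : ℕ}
    (hG : IsoperimetricWith G K) : Infinite V := by
  by_contra hfin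
  have : Finite V := not_infinite_iff_finite.mp hfin
  have hbd : outerBoundary G Set.univ = ∅ := by simp [outerBoundary]
  have := hG Set.univ Set.finite_univ
  rw [hbd, Set.ncard_empty, mul_zero, Nat.le_zero, Set.ncard_eq_zero] at this
  exact Set.univ_nonempty.ne_empty this

theorem ncard_biUnion_le_ncard_mul {α β : Type*} {s : Set α} (hs : s.Finite) {t : α → Set β}
    {n : ℕ} (ht : ∀ a ∈ s, (t a).ncard ≤ n) : (⋃ a ∈ s, t a).ncard ≤ s.ncard * n := by
  calc (⋃ a ∈ s, t a).ncard = (⋃ a ∈ hs.toFinset, t a).ncard := by simp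
    _ ≤ ∑ a ∈ hs.toFinset, (t a).ncard := hs.toFinset.set_ncard_biUnion_le t
    _ ≤ hs.toFinset.card * n := Finset.sum_le_card_nsmul _ _ _ (by simpa using ht)
    _ = s.ncard * n := by rw [Set.ncard_eq_toFinset_card s hs]

section Balls

variable {G : SimpleGraph V}

theorem ball_succ_subset (x : V) (R : ℕ) :
    ball G x (R + 1) ⊆ ⋃ u ∈ ball G x R, insert u (G.neighborSet u) := by
  rintro v ⟨hxv, hd⟩
  obtain hlt | heq := Nat.lt_or_eq_of_le hd
  · exact Set.mem_biUnion ⟨hxv, Nat.lt_succ_iff.mp hlt⟩ (Set.mem_insert v _)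
  obtain ⟨p, hp⟩ := hxv.symm.exists_walk_length_eq_dist
  cases p with
  | nil => simp at heq
  | @cons _ w _ hvw q =>
    have hq : G.dist x w ≤ R := by
      rw [SimpleGraph.dist_comm]
      have := dist_le q
      rw [Walk.length_cons, SimpleGraph.dist_comm, heq] at hp
      omega
    exact Set.mem_biUnion ⟨⟨q.reverse⟩, hq⟩
      (Set.mem_insert_of_mem _ hvw.symm)

theorem ball_finite (hG : ∀ v, (G.neighborSet v).Finite) (x : V) (R : ℕ) :
    (ball G x R).Finite := by
  induction R with
  | zero => exact (Set.finite_singleton x).subset fun v ⟨hxv, hd⟩ =>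
      ((hxv.dist_eq_zero_iff).mp (Nat.le_zero.mp hd)).symm
  | succ R ih => exact (ih.biUnion fun u _ => (hG u).insert u).subset (ball_succ_subset x R)

theorem ncard_ball_le {D : ℕ} (hD : ∀ v, (G.neighborSet v).Finite ∧ (G.neighborSet v).ncard ≤ D)
    (x : V) (R : ℕ) : (ball G x R).ncard ≤ (D + 1) ^ R := by
  have hfin := ball_finite (fun v => (hD v).1) x
  induction R with
  | zero =>
    calc (ball G x 0).ncard ≤ ({x} : Set V).ncard :=
          Set.ncard_le_ncard (fun v ⟨hxv, hd⟩ =>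
            ((hxv.dist_eq_zero_iff).mp (Nat.le_zero.mp hd)).symm) (Set.finite_singleton x)
      _ = (D + 1) ^ 0 := by simp
  | succ R ih =>
    calc (ball G x (R + 1)).ncard ≤ (⋃ u ∈ ball G x R, insert u (G.neighborSet u)).ncard :=
          Set.ncard_le_ncard (ball_succ_subset x R)
            ((hfin R).biUnion fun u _ => (hD u).1.insert u)
      _ ≤ (ball G x R).ncard * (D + 1) :=
          ncard_biUnion_le_ncard_mul (hfin R) fun u _ =>
            (Set.ncard_insert_le u _).trans (Nat.add_le_add_right (hD u).2 1)
      _ ≤ (D + 1) ^ (R + 1) := by rw [pow_succ]; exact Nat.mul_le_mul_right _ ih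

theorem ncard_le_pow_mul_ncard_of_rel {β : Type*} {D R : ℕ}
    (hD : ∀ v, (G.neighborSet v).Finite ∧ (G.neighborSet v).ncard ≤ D)
    {s : Set V} {t : Set β} (ht : t.Finite) (rel : V → β → Prop)
    (hrel : ∀ a ∈ s, ∃ b ∈ t, rel a b) (hclose : ∀ a a' b, rel a b → rel a' b → a' ∈ ball G a R) :
    s.ncard ≤ (D + 1) ^ R * t.ncard := by
  have hfiber : ∀ b, {a | rel a b}.Finite ∧ {a | rel a b}.ncard ≤ (D + 1) ^ R := by
    intro b
    rcases Set.eq_empty_or_nonempty {a | rel a b} with he | ⟨a, ha⟩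
    · simp [he]
    · have hsub : {a | rel a b} ⊆ ball G a R := fun a' ha' => hclose a a' b ha ha'
      have hball := ball_finite (fun v => (hD v).1) a R
      exact ⟨hball.subset hsub, (Set.ncard_le_ncard hsub hball).trans (ncard_ball_le hD a R)⟩
  have hcover : s ⊆ ⋃ b ∈ t, {a | rel a b} := fun a ha =>
    let ⟨b, hb, hab⟩ := hrel a ha
    Set.mem_biUnion hb hab
  calc s.ncard ≤ (⋃ b ∈ t, {a | rel a b}).ncard :=
        Set.ncard_le_ncard hcover (ht.biUnion fun b _ => (hfiber b).1)
    _ ≤ t.ncard * (D + 1) ^ R := ncard_biUnion_le_ncard_mul ht fun b _ => (hfiber b).2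
    _ = (D + 1) ^ R * t.ncard := mul_comm _ _

end Balls

theorem exists_mem_support_mem_outerBoundary {G : SimpleGraph V} {S : Set V} {a b : V}
    (p : G.Walk a b) (ha : a ∉ S) (hb : b ∈ S) : ∃ x ∈ p.support, x ∈ outerBoundary G S := by
  induction p with
  | nil => exact absurd hb ha
  | @cons a a' b hadj q ih =>
    by_cases ha' : a' ∈ S
    · exact ⟨a, Walk.start_mem_support _, ha, a', ha', hadj.symm⟩
    · obtain ⟨x, hx, hxS⟩ := ih ha' hb
      exact ⟨x, List.mem_cons_of_mem _ hx, hxS⟩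

theorem exists_mem_outerBoundary_dist_le {G : SimpleGraph V} (hG : G.Connected)
    {S : Set V} {a b : V} (ha : a ∉ S) (hb : b ∈ S) :
    ∃ x ∈ outerBoundary G S, G.dist a x ≤ G.dist a b := by
  classical
  obtain ⟨p, hp⟩ := (hG.preconnected a b).exists_walk_length_eq_dist
  obtain ⟨x, hx, hxS⟩ := exists_mem_support_mem_outerBoundary p ha hb
  exact ⟨x, hxS, (dist_le (p.takeUntil x hx)).trans (hp ▸ p.length_takeUntil_le_length hx)⟩

section Tree

open Finset

variable {T : SimpleGraph V}

theorem _root_.SimpleGraph.IsTree.eq_of_adj_of_dist_eq_add_one (hT : T.IsTree) (t₀ : V) {u u' v : V}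
    (hu : T.Adj u v) (hu' : T.Adj u' v) (hd : T.dist t₀ v = T.dist t₀ u + 1)
    (hd' : T.dist t₀ v = T.dist t₀ u' + 1) : u = u' := by
  classical
  obtain ⟨q, hq, -⟩ := (hT.connected t₀ v).exists_path_of_dist
  -- a vertex adjacent to `v` and closer to `t₀` lies on the path from `t₀` to `v`
  have key : ∀ w, T.Adj w v → T.dist t₀ v = T.dist t₀ w + 1 → w = q.penultimate := by
    intro w hw hdw
    refine hT.isAcyclic.eq_penultimate_of_adj_end hq hw.symm ?_
    by_contra hwq
    obtain ⟨p, hp, hpl⟩ := (hT.connected t₀ w).exists_path_of_dist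
    have hv := hT.isAcyclic.mem_support_of_ne_mem_support_of_adj_of_isPath hp hq hw hwq
    have := (dist_le (p.takeUntil v hv)).trans (p.length_takeUntil_le_length hv)
    omega
  rw [key u hu hd, key u' hu' hd']

theorem _root_.SimpleGraph.IsTree.sum_card_adj_le (hT : T.IsTree) [DecidableRel T.Adj]
    (S : Finset V) :
    ∑ u ∈ S, #(S.bipartiteAbove T.Adj u) ≤ 2 * #S := by
  classical
  obtain ⟨t₀⟩ := hT.connected.nonempty
  let IsParent : V → V → Prop := fun u v => T.Adj u v ∧ T.dist t₀ v = T.dist t₀ u + 1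
  have hparent : ∀ v, #(S.bipartiteBelow IsParent v) ≤ 1 := fun v =>
    card_le_one.mpr fun u hu u' hu' => by
      rw [mem_bipartiteBelow] at hu hu'
      exact hT.eq_of_adj_of_dist_eq_add_one t₀ hu.2.1 hu'.2.1 hu.2.2 hu'.2.2
  have hsplit : ∀ u, #(S.bipartiteAbove T.Adj u) ≤
      #(S.bipartiteAbove IsParent u) + #(S.bipartiteBelow IsParent u) := by
    intro u
    refine (card_le_card fun v hv => ?_).trans (card_union_le _ _)
    obtain ⟨hvS, huv⟩ := (mem_bipartiteAbove _).mp hv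
    rcases hT.dist_eq_dist_add_one_of_adj t₀ huv with h | h
    · exact mem_union_right _ ((mem_bipartiteBelow _).mpr ⟨hvS, huv.symm, h⟩)
    · exact mem_union_left _ ((mem_bipartiteAbove _).mpr ⟨hvS, huv, h⟩)
  calc ∑ u ∈ S, #(S.bipartiteAbove T.Adj u)
      ≤ ∑ u ∈ S, #(S.bipartiteAbove IsParent u) + ∑ u ∈ S, #(S.bipartiteBelow IsParent u) := by
        rw [← sum_add_distrib]; exact sum_le_sum fun u _ => hsplit u
    _ = ∑ v ∈ S, #(S.bipartiteBelow IsParent v) + ∑ u ∈ S, #(S.bipartiteBelow IsParent u) := by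
        rw [sum_card_bipartiteAbove_eq_sum_card_bipartiteBelow]
    _ ≤ #S + #S := by
        gcongr <;> exact (sum_le_card_nsmul _ _ 1 fun v _ => hparent v).trans (by simp)
    _ = 2 * #S := by ring

theorem isoperimetricWith_of_isTree (hT : T.IsTree) {δ : ℕ} (hδ : 3 ≤ δ)
    (hreg : ∀ w, (T.neighborSet w).ncard = δ) : IsoperimetricWith T δ := by
  classical
  intro S hS
  have hfin : ∀ w, (T.neighborSet w).Finite := fun w =>
    Set.finite_of_ncard_pos (by rw [hreg w]; omega)
  set s := hS.toFinset
  have hbfin := outerBoundary_finite hfin hS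
  set b := hbfin.toFinset
  have hdeg : ∀ u ∈ s, δ ≤ #(s.bipartiteAbove T.Adj u) + #(b.bipartiteAbove T.Adj u) := by
    intro u hu
    rw [← hreg u, ← Set.ncard_coe_finset, ← Set.ncard_coe_finset]
    refine (Set.ncard_le_ncard ?_ ((s.bipartiteAbove T.Adj u).finite_toSet.union
      (b.bipartiteAbove T.Adj u).finite_toSet)).trans (Set.ncard_union_le _ _)
    intro v huv
    by_cases hv : v ∈ S
    · exact Or.inl (by simpa [s] using ⟨hv, huv⟩)
    · exact Or.inr (by simpa [b] using ⟨⟨hv, u, by simpa [s] using hu, huv⟩, huv⟩)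
  have hout : ∑ u ∈ s, #(b.bipartiteAbove T.Adj u) ≤ δ * #b := by
    rw [sum_card_bipartiteAbove_eq_sum_card_bipartiteBelow, mul_comm]
    refine sum_le_card_nsmul _ _ _ fun v _ => ?_
    rw [← hreg v, ← Set.ncard_coe_finset]
    exact Set.ncard_le_ncard (fun u hu => by simpa using ((mem_bipartiteBelow _).mp hu).2.symm)
      (hfin v)
  have hmain : δ * #s ≤ 2 * #s + δ * #b :=
    calc δ * #s = ∑ _u ∈ s, δ := by rw [sum_const, smul_eq_mul, mul_comm]
      _ ≤ ∑ u ∈ s, (#(s.bipartiteAbove T.Adj u) + #(b.bipartiteAbove T.Adj u)) :=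
          sum_le_sum hdeg
      _ ≤ 2 * #s + δ * #b := by
          rw [sum_add_distrib]; exact Nat.add_le_add (hT.sum_card_adj_le s) hout
  rw [Set.ncard_eq_toFinset_card S hS, Set.ncard_eq_toFinset_card _ hbfin]
  nlinarith

end Tree

section QuasiIsometry

variable {U W : Type*} {Γ : SimpleGraph U} {T : SimpleGraph W} {c : ℕ} {φ : U → W} {ψ : W → U}

theorem dist_le_of_quasiInverse (hΓ : Γ.Connected)
    (hψ : ∀ t₁ t₂, Γ.dist (ψ t₁) (ψ t₂) ≤ c * T.dist t₁ t₂ + c)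
    (hψφ : ∀ g, Γ.dist g (ψ (φ g)) ≤ c) (g₁ g₂ : U) :
    Γ.dist g₁ g₂ ≤ c * T.dist (φ g₁) (φ g₂) + 3 * c := by
  have h₁ := hΓ.dist_triangle (u := g₁) (v := ψ (φ g₁)) (w := g₂)
  have h₂ := hΓ.dist_triangle (u := ψ (φ g₁)) (v := ψ (φ g₂)) (w := g₂)
  have h₃ := hψφ g₂
  rw [SimpleGraph.dist_comm] at h₃
  linarith [hψφ g₁, hψ (φ g₁) (φ g₂)]

theorem connected_of_quasiInverse [Infinite W] (hT : T.Connected)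
    (hTfin : ∀ t, (T.neighborSet t).Finite)
    (hφ : ∀ g₁ g₂, T.dist (φ g₁) (φ g₂) ≤ c * Γ.dist g₁ g₂ + c)
    (hφψ : ∀ t, T.dist t (φ (ψ t)) ≤ c) : Γ.Connected := by
  -- `Γ.dist` is `0` between different components, so every `t` whose image `ψ t` lies outside
  -- the component of `g` is close to `φ g`
  have hnear : ∀ g t, ¬ Γ.Reachable g (ψ t) → t ∈ ball T (φ g) (2 * c) := by
    intro g t hg
    have h₁ := hφ g (ψ t)
    rw [dist_eq_zero_of_not_reachable hg] at h₁
    have h₂ := hT.dist_triangle (u := φ g) (v := φ (ψ t)) (w := t)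
    rw [SimpleGraph.dist_comm (u := φ (ψ t))] at h₂
    exact ⟨hT.preconnected _ _, by linarith [hφψ t]⟩
  refine (connected_iff _).mpr ⟨fun g₁ g₂ => ?_, ⟨ψ (Classical.arbitrary W)⟩⟩
  by_contra h₁₂
  refine Set.infinite_univ (α := W) (((ball_finite hTfin (φ g₁) (2 * c)).union
    (ball_finite hTfin (φ g₂) (2 * c))).subset fun t _ => ?_)
  by_cases h : Γ.Reachable g₁ (ψ t)
  · exact Or.inr (hnear g₂ t fun h' => h₁₂ (h.trans h'.symm))
  · exact Or.inl (hnear g₁ t h)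

theorem exists_mem_outerBoundary_dist_le_of_quasiInverse (hΓ : Γ.Connected) (hT : T.Connected)
    (hψ : ∀ t₁ t₂, Γ.dist (ψ t₁) (ψ t₂) ≤ c * T.dist t₁ t₂ + c)
    (hψφ : ∀ g, Γ.dist g (ψ (φ g)) ≤ c) (hφψ : ∀ t, T.dist t (φ (ψ t)) ≤ c)
    {S : Set U} {t : W} (ht : t ∈ outerBoundary T (⋃ s ∈ S, ball T (φ s) c)) :
    ∃ b ∈ outerBoundary Γ S, Γ.dist (ψ t) b ≤ c * (c + 1) + 2 * c := by
  obtain ⟨htS, t', ht', htt'⟩ := ht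
  obtain ⟨s, hs, -, hst'⟩ := Set.mem_iUnion₂.mp ht'
  have hψt : ψ t ∉ S := fun h => htS <| Set.mem_biUnion h
    ⟨hT.preconnected _ _, by rw [SimpleGraph.dist_comm]; exact hφψ t⟩
  obtain ⟨b, hb, hdb⟩ := exists_mem_outerBoundary_dist_le hΓ hψt hs
  have hts : T.dist t (φ s) ≤ c + 1 := by
    have := hT.dist_triangle (u := φ s) (v := t') (w := t)
    rw [SimpleGraph.dist_comm]
    linarith [dist_eq_one_iff_adj.mpr htt']
  have h₁ := hΓ.dist_triangle (u := ψ t) (v := ψ (φ s)) (w := s)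
  have h₂ := hψφ s
  rw [SimpleGraph.dist_comm] at h₂
  refine ⟨b, hb, ?_⟩
  nlinarith [hψ t (φ s)]

theorem exists_isoperimetricWith_of_quasiIsometric (hT : T.IsTree) {δ : ℕ} (hδ : 3 ≤ δ)
    (hreg : ∀ t, (T.neighborSet t).ncard = δ) {D : ℕ}
    (hD : ∀ g, (Γ.neighborSet g).Finite ∧ (Γ.neighborSet g).ncard ≤ D)
    (hqi : QuasiIsometric Γ T) : ∃ K, IsoperimetricWith Γ K := by
  obtain ⟨c, -, φ, ψ, hφ, hψ, hψφ, hφψ⟩ := hqi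
  have hTdeg : ∀ t, (T.neighborSet t).Finite ∧ (T.neighborSet t).ncard ≤ δ := fun t =>
    ⟨Set.finite_of_ncard_pos (by rw [hreg t]; omega), (hreg t).le⟩
  have hTiso := isoperimetricWith_of_isTree hT hδ hreg
  have : Nonempty W := hT.connected.nonempty
  have : Infinite W := hTiso.infinite
  have hΓ : Γ.Connected := connected_of_quasiInverse hT.connected (fun t => (hTdeg t).1) hφ hφψ
  set L := c * (c + 1) + 2 * c
  refine ⟨(D + 1) ^ (3 * c) * (δ * (δ + 1) ^ (c * (2 * L) + 3 * c)), fun S hS => ?_⟩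
  -- the radius `c` makes `ψ t ∈ S` force `t ∈ Ŝ`, so `ψ` maps `∂Ŝ` outside `S`
  set Ŝ := ⋃ s ∈ S, ball T (φ s) c
  have hŜ : Ŝ.Finite := hS.biUnion fun s _ => ball_finite (fun t => (hTdeg t).1) _ _
  have h₁ : S.ncard ≤ (D + 1) ^ (3 * c) * (φ '' S).ncard :=
    ncard_le_pow_mul_ncard_of_rel hD (hS.image φ) (fun a b => φ a = b)
      (fun a ha => ⟨φ a, Set.mem_image_of_mem φ ha, rfl⟩) fun a a' b ha ha' =>
      ⟨hΓ.preconnected a a', by simpa [ha, ha'] using dist_le_of_quasiInverse hΓ hψ hψφ a a'⟩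
  have h₂ : (φ '' S).ncard ≤ Ŝ.ncard := Set.ncard_le_ncard (by
    rintro _ ⟨s, hs, rfl⟩; exact Set.mem_biUnion hs ⟨.rfl, by simp⟩) hŜ
  have h₃ : Ŝ.ncard ≤ δ * (outerBoundary T Ŝ).ncard := hTiso Ŝ hŜ
  have h₄ : (outerBoundary T Ŝ).ncard ≤
      (δ + 1) ^ (c * (2 * L) + 3 * c) * (outerBoundary Γ S).ncard := by
    refine ncard_le_pow_mul_ncard_of_rel hTdeg (outerBoundary_finite (fun g => (hD g).1) hS)
      (fun t b => Γ.dist (ψ t) b ≤ L)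
      (fun t ht => exists_mem_outerBoundary_dist_le_of_quasiInverse hΓ hT.connected hψ hψφ hφψ ht)
      fun t t' b ht ht' => ⟨hT.connected.preconnected _ _, ?_⟩
    have := hΓ.dist_triangle (u := ψ t) (v := b) (w := ψ t')
    rw [SimpleGraph.dist_comm (u := b)] at this
    have := dist_le_of_quasiInverse hT.connected hφ hφψ t t'
    nlinarith
  calc S.ncard ≤ (D + 1) ^ (3 * c) * Ŝ.ncard := h₁.trans (Nat.mul_le_mul_left _ h₂)
    _ ≤ (D + 1) ^ (3 * c) * (δ * ((δ + 1) ^ (c * (2 * L) + 3 * c) *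
        (outerBoundary Γ S).ncard)) := Nat.mul_le_mul_left _ (h₃.trans (Nat.mul_le_mul_left _ h₄))
    _ = _ := by ring

end QuasiIsometry

section Fire

variable {H : SimpleGraph V} {r : ℕ} {X₀ : Set V} {W : ℕ → Set V}

theorem notMem_of_mem_fireSet {n : ℕ} {v : V} (hv : v ∈ fireSet H r X₀ W n) {i : ℕ}
    (hi : 1 ≤ i) (hin : i ≤ n) : v ∉ W i := by
  cases n with
  | zero => omega
  | succ n =>
    obtain ⟨u, -, p, -, hp⟩ := hv
    exact hp v p.end_mem_support i hi hin

theorem notMem_of_mem_fireSet_of_disjoint (hW : ∀ n, Disjoint (fireSet H r X₀ W n) (W (n + 1)))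
    {n : ℕ} {v : V} (hv : v ∈ fireSet H r X₀ W n) {i : ℕ} (hi : 1 ≤ i) (hin : i ≤ n + 1) :
    v ∉ W i := by
  rcases Nat.lt_or_eq_of_le hin with hlt | rfl
  · exact notMem_of_mem_fireSet hv hi (Nat.lt_succ_iff.mp hlt)
  · exact Set.disjoint_left.mp (hW n) hv

theorem fireSet_subset_succ (hW : ∀ n, Disjoint (fireSet H r X₀ W n) (W (n + 1))) (n : ℕ) :
    fireSet H r X₀ W n ⊆ fireSet H r X₀ W (n + 1) := fun v hv =>
  ⟨v, hv, Walk.nil, Nat.zero_le r, fun w hw i hi hin => by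
    rw [Walk.support_nil, List.mem_singleton] at hw
    exact hw ▸ notMem_of_mem_fireSet_of_disjoint hW hv hi hin⟩

theorem mem_fireSet_succ_of_adj (hr : 1 ≤ r)
    (hW : ∀ n, Disjoint (fireSet H r X₀ W n) (W (n + 1))) {n : ℕ} {u v : V}
    (hu : u ∈ fireSet H r X₀ W n) (huv : H.Adj u v) (hv : ∀ i, 1 ≤ i → i ≤ n + 1 → v ∉ W i) :
    v ∈ fireSet H r X₀ W (n + 1) := by
  refine ⟨u, hu, Walk.cons huv Walk.nil, by simpa using hr, fun w hw i hi hin => ?_⟩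
  rw [Walk.support_cons, Walk.support_nil, List.mem_cons, List.mem_singleton] at hw
  rcases hw with rfl | rfl
  · exact notMem_of_mem_fireSet_of_disjoint hW hu hi hin
  · exact hv i hi hin

theorem fireSet_one_succ_subset (n : ℕ) :
    fireSet H 1 X₀ W (n + 1) ⊆ ⋃ u ∈ fireSet H 1 X₀ W n, insert u (H.neighborSet u) := by
  rintro v ⟨u, hu, p, hp, -⟩
  refine Set.mem_biUnion hu ?_
  cases p with
  | nil => exact Set.mem_insert _ _
  | cons huw q =>
    obtain rfl := Walk.eq_of_length_eq_zero (by simpa using hp : q.length = 0)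
    exact Set.mem_insert_of_mem _ huw

theorem fireSet_one_finite (hH : ∀ v, (H.neighborSet v).Finite) (hX₀ : X₀.Finite) (n : ℕ) :
    (fireSet H 1 X₀ W n).Finite := by
  induction n with
  | zero => exact hX₀
  | succ n ih => exact (ih.biUnion fun u _ => (hH u).insert u).subset (fireSet_one_succ_subset n)

end Fire

open Filter in
theorem exists_tendsto_atTop_of_expanding {q : ℝ} (hq : 0 < q) (C : ℝ) (k : ℕ) :
    ∃ B : ℕ, ∀ a : ℕ → ℝ, B ≤ a 0 → (∀ n, (1 + q) * a n ≤ a (n + 1) + C * (n + 1) ^ k) →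
      Tendsto a atTop atTop := by
  set ρ := 1 + q / 2
  have hρ : 1 < ρ := by simp only [ρ]; linarith
  obtain ⟨M, hM⟩ := (tendsto_pow_const_div_const_pow_of_one_lt k hρ).bddAbove_range
  have hpoly : ∀ n : ℕ, C * (n + 1) ^ k ≤ |C| * M * ρ * ρ ^ n := by
    intro n
    have h := hM ⟨n + 1, rfl⟩
    push_cast at h
    rw [div_le_iff₀ (by positivity)] at h
    calc C * (n + 1) ^ k ≤ |C| * (n + 1) ^ k :=
          mul_le_mul_of_nonneg_right (le_abs_self C) (by positivity)
      _ ≤ |C| * (M * ρ ^ (n + 1)) := mul_le_mul_of_nonneg_left h (abs_nonneg C)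
      _ = |C| * M * ρ * ρ ^ n := by ring
  -- starting above `B`, the losses `C (n+1)^k` never eat more than half of the expansion
  refine ⟨⌈2 * |C| * M * ρ / q⌉₊ + 1, fun a ha₀ ha => ?_⟩
  set B : ℝ := ((⌈2 * |C| * M * ρ / q⌉₊ + 1 : ℕ) : ℝ)
  have hB : |C| * M * ρ ≤ q / 2 * B := by
    have := Nat.le_ceil (2 * |C| * M * ρ / q)
    rw [div_le_iff₀ hq] at this
    simp only [B, Nat.cast_add, Nat.cast_one]
    nlinarith
  have hgeom : ∀ n, B * ρ ^ n ≤ a n := by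
    intro n
    induction n with
    | zero => simpa using ha₀
    | succ n ih =>
      have hexp : B * ρ ^ (n + 1) = (1 + q) * (B * ρ ^ n) - q / 2 * B * ρ ^ n := by
        simp only [ρ]; ring
      have := mul_le_mul_of_nonneg_left ih (by linarith : (0 : ℝ) ≤ 1 + q)
      have := mul_le_mul_of_nonneg_right hB (by positivity : (0 : ℝ) ≤ ρ ^ n)
      linarith [ha n, hpoly n]
  exact tendsto_atTop_mono hgeom <|
    (tendsto_pow_atTop_atTop_of_one_lt hρ).const_mul_atTop (by positivity)

open Finset in
theorem ncard_biUnion_Icc_le {α : Type*} {W : ℕ → Set α} {c d : ℕ}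
    (hW : ∀ i, 1 ≤ i → (W i).ncard ≤ c * i ^ d) (n : ℕ) :
    (⋃ i ∈ Icc 1 n, W i).ncard ≤ c * n ^ (d + 1) := by
  calc (⋃ i ∈ Icc 1 n, W i).ncard ≤ ∑ i ∈ Icc 1 n, (W i).ncard := set_ncard_biUnion_le _ _
    _ ≤ #(Icc 1 n) • (c * n ^ d) := sum_le_card_nsmul _ _ _ fun i hi =>
        (hW i (mem_Icc.mp hi).1).trans
          (Nat.mul_le_mul_left _ (Nat.pow_le_pow_left (mem_Icc.mp hi).2 d))
    _ = c * n ^ (d + 1) := by rw [Nat.card_Icc, smul_eq_mul, Nat.add_sub_cancel]; ring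

section Expansion

open Finset

variable {U : Type*} {Γ : SimpleGraph U} {H : SimpleGraph V} {r : ℕ} {X₀ : Set V}
  {W : ℕ → Set V} (f : Γ →g H)

theorem ncard_preimage_fireSet_add_ncard_outerBoundary_le (hf : Function.Injective f)
    (hr : 1 ≤ r) (hdis : ∀ n, Disjoint (fireSet H r X₀ W n) (W (n + 1)))
    (hX : ∀ n, (fireSet H r X₀ W n).Finite) (hW : ∀ i, 1 ≤ i → (W i).Finite) (n : ℕ) :
    (f ⁻¹' fireSet H r X₀ W n).ncard + (outerBoundary Γ (f ⁻¹' fireSet H r X₀ W n)).ncard ≤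
      (f ⁻¹' fireSet H r X₀ W (n + 1)).ncard + (⋃ i ∈ Icc 1 (n + 1), W i).ncard := by
  set S := fun k => f ⁻¹' fireSet H r X₀ W k
  set A := ⋃ i ∈ Icc 1 (n + 1), W i
  have hA : A.Finite := (Icc 1 (n + 1)).finite_toSet.biUnion fun i hi =>
    hW i (mem_Icc.mp hi).1
  have hS : ∀ k, (S k).Finite := fun k => (hX k).preimage hf.injOn
  have hsub : S n ∪ outerBoundary Γ (S n) ⊆ S (n + 1) ∪ f ⁻¹' A := by
    rintro v (hv | ⟨-, u, hu, huv⟩)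
    · exact Or.inl (fireSet_subset_succ hdis n hv)
    by_cases hfv : ∃ i ∈ Icc 1 (n + 1), f v ∈ W i
    · obtain ⟨i, hi, hvi⟩ := hfv
      exact Or.inr (Set.mem_biUnion hi hvi)
    · exact Or.inl (mem_fireSet_succ_of_adj hr hdis hu (f.map_adj huv) fun i hi hin hvi =>
        hfv ⟨i, mem_Icc.mpr ⟨hi, hin⟩, hvi⟩)
  have hfin : (S (n + 1) ∪ f ⁻¹' A).Finite := (hS _).union (hA.preimage hf.injOn)
  calc (S n).ncard + (outerBoundary Γ (S n)).ncard = (S n ∪ outerBoundary Γ (S n)).ncard :=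
        (Set.ncard_union_eq (Set.disjoint_left.mpr fun _ hv hv' => hv'.1 hv) (hS n)
          (hfin.subset (Set.subset_union_right.trans hsub))).symm
    _ ≤ (S (n + 1) ∪ f ⁻¹' A).ncard := Set.ncard_le_ncard hsub hfin
    _ ≤ (S (n + 1)).ncard + (f ⁻¹' A).ncard := Set.ncard_union_le _ _
    _ ≤ (S (n + 1)).ncard + A.ncard :=
        Nat.add_le_add_left (Set.ncard_le_ncard_of_injOn f (fun _ h => h) hf.injOn hA) _

theorem mul_ncard_preimage_fireSet_le_of_isoperimetricWith {K c d : ℕ} (hK : IsoperimetricWith Γ K)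
    (hf : Function.Injective f) (hr : 1 ≤ r)
    (hdis : ∀ n, Disjoint (fireSet H r X₀ W n) (W (n + 1)))
    (hX : ∀ n, (fireSet H r X₀ W n).Finite)
    (hW : ∀ i, 1 ≤ i → (W i).Finite ∧ (W i).ncard ≤ c * i ^ d) (n : ℕ) :
    (1 + 1 / (K + 1) : ℝ) * (f ⁻¹' fireSet H r X₀ W n).ncard ≤
      (f ⁻¹' fireSet H r X₀ W (n + 1)).ncard + c * (n + 1) ^ (d + 1) := by
  have hcount := ncard_preimage_fireSet_add_ncard_outerBoundary_le f hf hr hdis hX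
    (fun i hi => (hW i hi).1) n
  have hiso := hK _ ((hX n).preimage hf.injOn)
  have hA := ncard_biUnion_Icc_le (fun i hi => (hW i hi).2) (n + 1)
  generalize (outerBoundary Γ (f ⁻¹' fireSet H r X₀ W n)).ncard = b at hcount hiso
  generalize (f ⁻¹' fireSet H r X₀ W n).ncard = a at hcount hiso ⊢
  have hab : (a : ℝ) / (K + 1) ≤ b := by
    rw [div_le_iff₀ (by positivity)]
    have : (a : ℝ) ≤ K * b := by exact_mod_cast hiso
    nlinarith [b.cast_nonneg (α := ℝ)]
  have : (a : ℝ) + b ≤ (f ⁻¹' fireSet H r X₀ W (n + 1)).ncard + c * (n + 1) ^ (d + 1) := by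
    exact_mod_cast hcount.trans (Nat.add_le_add_left hA _)
  linarith [show (1 + 1 / (K + 1) : ℝ) * a = a + a / (K + 1) by ring]

end Expansion

/-- if a locally finite graph `H` contains a bounded degree subgraph which is
quasi-isometric to the infinite `δ`-regular tree with `δ ≥ 3`, then `H` does not satisfy a
polynomial containment property. -/
theorem stmt19 {V : Type*} (H : SimpleGraph V) (hlf : LocallyFiniteGraph H)
    (delta : ℕ) (hdelta : 3 ≤ delta)
    (htree : ∃ (W : Type) (T : SimpleGraph W) (G : H.Subgraph),
      Infinite W ∧ T.Connected ∧ T.IsAcyclic ∧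
      (∀ w : W, (T.neighborSet w).ncard = delta) ∧
      BoundedDegree G.coe ∧ QuasiIsometric G.coe T) :
    ∀ d : ℕ, ¬ ∃ c : ℕ, 1 ≤ c ∧ HasContainmentProperty H 1 (fun n => c * n ^ d) := by
  rintro d ⟨c, -, hcont⟩
  obtain ⟨_, T, G, -, hTconn, hTacyc, hreg, ⟨D, hD⟩, hqi⟩ := htree
  obtain ⟨K, hK⟩ := exists_isoperimetricWith_of_quasiIsometric ⟨hTconn, hTacyc⟩ hdelta hreg hD hqi
  have : Nonempty G.verts := let ⟨_, _, _, ψ, _⟩ := hqi; ⟨ψ hTconn.nonempty.some⟩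
  have : Infinite G.verts := hK.infinite
  obtain ⟨B, hB⟩ := exists_tendsto_atTop_of_expanding (q := 1 / (K + 1)) (by positivity) c (d + 1)
  obtain ⟨S₀, -, hS₀, hS₀B⟩ := (Set.infinite_univ (α := G.verts)).exists_subset_ncard_eq B
  obtain ⟨W, hW, hdis, N, -, hN⟩ := hcont (G.hom '' S₀) (hS₀.image _)
  set X := fireSet H 1 (G.hom '' S₀) W
  have hX : ∀ n, (X n).Finite := fireSet_one_finite hlf (hS₀.image _)
  have hgrowth := hB (fun n => ((G.hom ⁻¹' X n).ncard : ℝ))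
    (by simp [X, fireSet, hS₀B])
    (mul_ncard_preimage_fireSet_le_of_isoperimetricWith G.hom hK Subgraph.hom_injective le_rfl
      hdis hX hW)
  obtain ⟨n, hn, hnN⟩ := ((hgrowth.eventually_gt_atTop (X N).ncard).and
    (Filter.eventually_ge_atTop N)).exists
  have hle : (G.hom ⁻¹' X n).ncard ≤ (X N).ncard := by
    rw [← hN n hnN]
    exact Set.ncard_le_ncard_of_injOn G.hom (fun _ h => h) Subgraph.hom_injective.injOn (hX n)
  exact absurd hn (not_lt.mpr (by exact_mod_cast hle))

end Firefighter
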